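/- arXiv:2306.07943 — 2 statements merged into one kernel-verified Lean document; each statement's English description precedes it below -/
import Mathlib

section
/- Let X be a metric space, (Y, ‖·‖) a normed linear space, L ≥ 0, N a natural number, and let S_1, …, S_N ⊂ X. Let δ > 0 and let ρ_1, …, ρ_N ∈ (0,1] be such that the closed neighbourhoods B(S_i, ρ_i) = {x ∈ X : dist(x, S_i) ≤ ρ_i} are pairwise disjoint. Let f : X → Y be L-Lipschitz and for each i let g_i : B(S_i, ρ_i) → Y be L-Lipschitz with sup_{x ∈ B(S_i,ρ_i)} ‖g_i(x) − f(x)‖ ≤ δ ρ_i. Then there exists an (L + 4δ)-Lipschitz map g : X → Y such that g = g_i on each S_i, sup_{x ∈ X} ‖g(x) − f(x)‖ ≤ δ, and g = f outside ⋃_{i=1}^N B(S_i, ρ_i). -/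
open MeasureTheory Metric Set Filter Topology ENNReal

noncomputable section

/-- **Lipschitz extension lemma.** Let `X` be a metric space, `Y` a normed
linear space, `L ≥ 0`, `S_1, …, S_N ⊆ X`, `δ > 0`, and `ρ_i ∈ (0,1]` such that the closed
neighbourhoods `B(S_i, ρ_i)` are pairwise disjoint. Let `f : X → Y` be `L`-Lipschitz and let
`g_i : B(S_i,ρ_i) → Y` be `L`-Lipschitz with `sup ‖g_i − f‖ ≤ δ ρ_i` on `B(S_i,ρ_i)`.
Then there is an `(L + 4δ)`-Lipschitz `g : X → Y` with `g = g_i` on each `S_i`,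
`sup_X ‖g − f‖ ≤ δ`, and `g = f` outside `⋃_i B(S_i, ρ_i)`. -/
theorem stmt11 (X : Type*) [MetricSpace X] (Y : Type*) [NormedAddCommGroup Y] [NormedSpace ℝ Y]
    (L : NNReal) (N : ℕ) (S : Fin N → Set X) (δ : NNReal) (hδ : 0 < δ)
    (ρ : Fin N → ℝ) (hρ₀ : ∀ i, 0 < ρ i) (hρ₁ : ∀ i, ρ i ≤ 1)
    (hdisj : ∀ i j, i ≠ j → Disjoint (cthickening (ρ i) (S i)) (cthickening (ρ j) (S j)))
    (f : X → Y) (hf : LipschitzWith L f)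
    (g : Fin N → X → Y) (hg : ∀ i, LipschitzOnWith L (g i) (cthickening (ρ i) (S i)))
    (hgf : ∀ i, ∀ x ∈ cthickening (ρ i) (S i), ‖g i x - f x‖ ≤ (δ : ℝ) * ρ i) :
    ∃ G : X → Y, LipschitzWith (L + 4 * δ) G ∧
      (∀ i, EqOn G (g i) (S i)) ∧
      (∀ x, ‖G x - f x‖ ≤ (δ : ℝ)) ∧
      ∀ x ∉ ⋃ i, cthickening (ρ i) (S i), G x = f x := by
  classical
  -- membership in cthickening via infDist
  have hmem : ∀ (i : Fin N) (x : X), (S i).Nonempty →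
      (x ∈ cthickening (ρ i) (S i) ↔ infDist x (S i) ≤ ρ i) := by
    intro i x hS
    rw [mem_cthickening_iff]
    exact ENNReal.le_ofReal_iff_toReal_le (infEdist_ne_top hS) (hρ₀ i).le
  set lam : Fin N → X → ℝ := fun i x =>
    if (S i).Nonempty then max 0 (1 - infDist x (S i) / ρ i) else 0 with hlam
  have lam_nonneg : ∀ i x, 0 ≤ lam i x := by
    intro i x; simp only [hlam]; split <;> simp
  have lam_le_one : ∀ i x, lam i x ≤ 1 := by
    intro i x; simp only [hlam]; split
    · refine max_le one_pos.le ?_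
      have := infDist_nonneg (s := S i) (x := x)
      have : 0 ≤ infDist x (S i) / ρ i := div_nonneg this (hρ₀ i).le
      linarith
    · exact one_pos.le
  -- lam vanishes outside the thickening
  have lam_zero : ∀ i x, x ∉ cthickening (ρ i) (S i) → lam i x = 0 := by
    intro i x hx
    simp only [hlam]
    split
    · rename_i hS
      have h1 : ρ i < infDist x (S i) := by
        by_contra h
        exact hx ((hmem i x hS).2 (not_lt.1 h))
      have : 1 - infDist x (S i) / ρ i ≤ 0 := by
        rw [sub_nonpos, le_div_iff₀ (hρ₀ i)]
        nlinarith
      exact max_eq_left this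
    · rfl
  have lam_one : ∀ i x, x ∈ S i → lam i x = 1 := by
    intro i x hx
    have hS : (S i).Nonempty := ⟨x, hx⟩
    simp only [hlam, if_pos hS, infDist_zero_of_mem hx, zero_div, sub_zero]
    exact max_eq_right zero_le_one
  -- key smallness: if x ∈ B(S i, ρ i) and y ∉ B(S i, ρ i), then lam i x * ρ i ≤ dist x y
  have lam_small : ∀ i x y, x ∈ cthickening (ρ i) (S i) → y ∉ cthickening (ρ i) (S i) →
      lam i x * ρ i ≤ dist x y := by
    intro i x y hx hy
    rcases (S i).eq_empty_or_nonempty with hS | hS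
    · simp [hS, cthickening_empty] at hx
    have hyd : ρ i < infDist y (S i) := by
      by_contra h
      exact hy ((hmem i y hS).2 (not_lt.1 h))
    have hxy : infDist y (S i) ≤ infDist x (S i) + dist x y := by
      rw [dist_comm]; exact infDist_le_infDist_add_dist
    simp only [hlam, if_pos hS]
    rw [max_mul_of_nonneg _ _ (hρ₀ i).le, zero_mul]
    refine max_le dist_nonneg ?_
    have : (1 - infDist x (S i) / ρ i) * ρ i = ρ i - infDist x (S i) := by
      rw [sub_mul, one_mul, div_mul_cancel₀ _ (hρ₀ i).ne']
    rw [this]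
    linarith [infDist_nonneg (s := S i) (x := x)]
  -- lam is (1/ρ i)-Lipschitz
  have lam_lip : ∀ i x y, |lam i x - lam i y| ≤ dist x y / ρ i := by
    intro i x y
    simp only [hlam]
    split
    · rw [max_comm 0 (1 - infDist x (S i) / ρ i), max_comm 0 (1 - infDist y (S i) / ρ i)]
      refine (abs_max_sub_max_le_abs _ _ _).trans ?_
      have heq : (1 - infDist x (S i) / ρ i) - (1 - infDist y (S i) / ρ i)
          = (infDist y (S i) - infDist x (S i)) / ρ i := by ring
      rw [heq, abs_div, abs_of_pos (hρ₀ i)]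
      have ha : infDist y (S i) ≤ infDist x (S i) + dist y x := infDist_le_infDist_add_dist
      have hb : infDist x (S i) ≤ infDist y (S i) + dist x y := infDist_le_infDist_add_dist
      rw [dist_comm y x] at ha
      have : |infDist y (S i) - infDist x (S i)| ≤ dist x y := abs_sub_le_iff.2 ⟨by linarith, by linarith⟩
      gcongr
      exact (hρ₀ i).le
    · simpa using div_nonneg dist_nonneg (hρ₀ i).le
  set G : X → Y := fun x => f x + ∑ j, lam j x • (g j x - f x) with hGdef
  have sum_eq : ∀ (i : Fin N) (x : X), x ∈ cthickening (ρ i) (S i) →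
      ∑ j, lam j x • (g j x - f x) = lam i x • (g i x - f x) := by
    intro i x hx
    refine Finset.sum_eq_single i ?_ (by simp)
    intro j _ hj
    have hxj : x ∉ cthickening (ρ j) (S j) := fun hxj =>
      (hdisj j i hj).ne_of_mem hxj hx rfl
    rw [lam_zero j x hxj, zero_smul]
  have sum_zero : ∀ x, x ∉ (⋃ i, cthickening (ρ i) (S i)) →
      ∑ j, lam j x • (g j x - f x) = 0 := by
    intro x hx
    refine Finset.sum_eq_zero fun j _ => ?_
    rw [lam_zero j x (fun h => hx (mem_iUnion.2 ⟨j, h⟩)), zero_smul]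
  have hfL : ∀ x y : X, ‖f x - f y‖ ≤ (L : ℝ) * dist x y := by
    intro x y
    rw [← dist_eq_norm]
    exact hf.dist_le_mul x y
  have hgL : ∀ i, ∀ x ∈ cthickening (ρ i) (S i), ∀ y ∈ cthickening (ρ i) (S i),
      ‖g i x - g i y‖ ≤ (L : ℝ) * dist x y := by
    intro i x hx y hy
    rw [← dist_eq_norm]
    exact lipschitzOnWith_iff_dist_le_mul.1 (hg i) x hx y hy
  -- bound for a single cross term
  have tbound : ∀ (i : Fin N) (x y : X), x ∈ cthickening (ρ i) (S i) →
      y ∉ cthickening (ρ i) (S i) →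
      ‖lam i x • (g i x - f x)‖ ≤ (δ : ℝ) * dist x y := by
    intro i x y hx hy
    rw [norm_smul, Real.norm_eq_abs, abs_of_nonneg (lam_nonneg i x)]
    have h1 := hgf i x hx
    have h2 := lam_small i x y hx hy
    have h3 := lam_nonneg i x
    have h4 : (0:ℝ) ≤ δ := δ.coe_nonneg
    have h5 : ‖g i x - f x‖ ≥ 0 := norm_nonneg _
    nlinarith [mul_le_mul_of_nonneg_left h1 h3]
  -- the outside-cross-region bound
  have hB : ∀ (x y : X) (i : Fin N), x ∈ cthickening (ρ i) (S i) →
      y ∉ cthickening (ρ i) (S i) →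
      ‖G x - G y‖ ≤ ((L : ℝ) + 4 * δ) * dist x y := by
    intro x y i hx hyi
    have h4 : (0:ℝ) ≤ δ := δ.coe_nonneg
    by_cases hy : ∃ j, y ∈ cthickening (ρ j) (S j)
    · obtain ⟨j, hyj'⟩ := hy
      have hji : j ≠ i := fun h => hyi (h ▸ hyj')
      have hxj : x ∉ cthickening (ρ j) (S j) := fun hxj =>
        (hdisj j i hji).ne_of_mem hxj hx rfl
      have hid : G x - G y = (f x - f y) + lam i x • (g i x - f x)
          - lam j y • (g j y - f y) := by
        simp only [hGdef, sum_eq i x hx, sum_eq j y hyj']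
        abel
      rw [hid]
      have t1 := tbound i x y hx hyi
      have t2 := tbound j y x hyj' hxj
      rw [dist_comm y x] at t2
      calc ‖(f x - f y) + lam i x • (g i x - f x) - lam j y • (g j y - f y)‖
          ≤ ‖(f x - f y) + lam i x • (g i x - f x)‖ + ‖lam j y • (g j y - f y)‖ :=
            norm_sub_le _ _
        _ ≤ ‖f x - f y‖ + ‖lam i x • (g i x - f x)‖ + ‖lam j y • (g j y - f y)‖ := by
            have := norm_add_le (f x - f y) (lam i x • (g i x - f x))
            linarith
        _ ≤ (L : ℝ) * dist x y + (δ : ℝ) * dist x y + (δ : ℝ) * dist x y := by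
            have := hfL x y; linarith
        _ ≤ ((L : ℝ) + 4 * δ) * dist x y := by nlinarith [dist_nonneg (x := x) (y := y)]
    · push_neg at hy
      have hid : G x - G y = (f x - f y) + lam i x • (g i x - f x) := by
        simp only [hGdef, sum_eq i x hx,
          sum_zero y (fun h => by obtain ⟨j, hj⟩ := mem_iUnion.1 h; exact hy j hj)]
        abel
      rw [hid]
      have t1 := tbound i x y hx hyi
      calc ‖(f x - f y) + lam i x • (g i x - f x)‖
          ≤ ‖f x - f y‖ + ‖lam i x • (g i x - f x)‖ := norm_add_le _ _
        _ ≤ (L : ℝ) * dist x y + (δ : ℝ) * dist x y := by have := hfL x y; linarith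
        _ ≤ ((L : ℝ) + 4 * δ) * dist x y := by nlinarith [dist_nonneg (x := x) (y := y)]
  have key : ∀ x y : X, ‖G x - G y‖ ≤ ((L : ℝ) + 4 * δ) * dist x y := by
    intro x y
    have h4 : (0:ℝ) ≤ δ := δ.coe_nonneg
    by_cases hx : ∃ i, x ∈ cthickening (ρ i) (S i)
    · obtain ⟨i, hxi⟩ := hx
      by_cases hy : y ∈ cthickening (ρ i) (S i)
      · -- both in the same thickening: convex combination estimate
        have hid : G x - G y = (1 - lam i x) • (f x - f y) + lam i x • (g i x - g i y)
            + (lam i x - lam i y) • (g i y - f y) := by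
          simp only [hGdef, sum_eq i x hxi, sum_eq i y hy]
          module
        rw [hid]
        have h1 := hfL x y
        have h2 := hgL i x hxi y hy
        have h3 := hgf i y hy
        have ha0 := lam_nonneg i x
        have ha1 := lam_le_one i x
        have hll := lam_lip i x y
        have hd0 : (0:ℝ) ≤ dist x y := dist_nonneg
        have hy0 : (0:ℝ) ≤ ‖g i y - f y‖ := norm_nonneg _
        have step : |lam i x - lam i y| * ‖g i y - f y‖ ≤ (δ : ℝ) * dist x y := by
          have := mul_le_mul hll h3 hy0 (div_nonneg hd0 (hρ₀ i).le)
          have heq : dist x y / ρ i * ((δ : ℝ) * ρ i) = (δ : ℝ) * dist x y := by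
            rw [div_mul_eq_mul_div, mul_div_assoc, mul_div_assoc, div_self (hρ₀ i).ne',
              mul_one, mul_comm]
          linarith [heq ▸ this]
        calc ‖(1 - lam i x) • (f x - f y) + lam i x • (g i x - g i y)
              + (lam i x - lam i y) • (g i y - f y)‖
            ≤ ‖(1 - lam i x) • (f x - f y) + lam i x • (g i x - g i y)‖
              + ‖(lam i x - lam i y) • (g i y - f y)‖ := norm_add_le _ _
          _ ≤ ‖(1 - lam i x) • (f x - f y)‖ + ‖lam i x • (g i x - g i y)‖
              + ‖(lam i x - lam i y) • (g i y - f y)‖ := by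
              have := norm_add_le ((1 - lam i x) • (f x - f y)) (lam i x • (g i x - g i y))
              linarith
          _ = (1 - lam i x) * ‖f x - f y‖ + lam i x * ‖g i x - g i y‖
              + |lam i x - lam i y| * ‖g i y - f y‖ := by
              rw [norm_smul, norm_smul, norm_smul, Real.norm_eq_abs, Real.norm_eq_abs,
                Real.norm_eq_abs, abs_of_nonneg (by linarith), abs_of_nonneg ha0]
          _ ≤ ((L : ℝ) + 4 * δ) * dist x y := by
              nlinarith [mul_le_mul_of_nonneg_left h1 (by linarith : (0:ℝ) ≤ 1 - lam i x),
                mul_le_mul_of_nonneg_left h2 ha0, norm_nonneg (f x - f y),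
                norm_nonneg (g i x - g i y)]
      · exact hB x y i hxi hy
    · push_neg at hx
      by_cases hy : ∃ j, y ∈ cthickening (ρ j) (S j)
      · obtain ⟨j, hyj⟩ := hy
        rw [norm_sub_rev, dist_comm]
        exact hB y x j hyj (hx j)
      · push_neg at hy
        have hid : G x - G y = f x - f y := by
          simp only [hGdef,
            sum_zero x (fun h => by obtain ⟨j, hj⟩ := mem_iUnion.1 h; exact hx j hj),
            sum_zero y (fun h => by obtain ⟨j, hj⟩ := mem_iUnion.1 h; exact hy j hj)]
          abel
        rw [hid]
        refine (hfL x y).trans ?_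
        nlinarith [dist_nonneg (x := x) (y := y)]
  refine ⟨G, ?_, ?_, ?_, ?_⟩
  · refine LipschitzWith.of_dist_le_mul fun x y => ?_
    rw [dist_eq_norm]
    refine (key x y).trans (le_of_eq ?_)
    push_cast
    ring
  · intro i x hx
    have hx' : x ∈ cthickening (ρ i) (S i) := self_subset_cthickening _ hx
    simp only [hGdef, sum_eq i x hx', lam_one i x hx, one_smul]
    abel
  · intro x
    have hGf : G x - f x = ∑ j, lam j x • (g j x - f x) := by
      simp only [hGdef]; abel
    rw [hGf]
    by_cases hx : ∃ i, x ∈ cthickening (ρ i) (S i)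
    · obtain ⟨i, hxi⟩ := hx
      rw [sum_eq i x hxi, norm_smul, Real.norm_eq_abs, abs_of_nonneg (lam_nonneg i x)]
      have h1 := hgf i x hxi
      have h2 := lam_le_one i x
      have h3 := lam_nonneg i x
      have h4 : (0:ℝ) ≤ δ := δ.coe_nonneg
      nlinarith [norm_nonneg (g i x - f x), hρ₁ i, hρ₀ i]
    · push_neg at hx
      rw [sum_zero x (fun h => by obtain ⟨j, hj⟩ := mem_iUnion.1 h; exact hx j hj)]
      simpa using δ.coe_nonneg
  · intro x hx
    simp only [hGdef, sum_zero x hx, add_zero]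
end
end

section
/- Let n ≤ m be natural numbers and let S ⊂ ℝ^m be an H^n-measurable set with H^n(S) < ∞. Then the collection of n-dimensional affine subspaces T of ℝ^m (i.e. translates T = x + V of n-dimensional linear subspaces V ⊂ ℝ^m) satisfying H^n(T ∩ S) > 0 is countable. -/
open MeasureTheory Metric Set Filter Topology ENNReal

noncomputable section

abbrev Euc (n : ℕ) : Type := EuclideanSpace ℝ (Fin n)

/-!
Two distinct `n`-dimensional affine subspaces meet, if at all, in a translate of a linear subspace
of dimension `< n`, which is `H^n`-null. Hence the affine subspaces are pairwise almost disjoint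
closed sets for the finite measure `H^n` restricted to `S`, and only countably many of them can
carry positive mass.
-/

open Module Pointwise

theorem MeasureTheory.countable_setOf_measure_inter_pos_of_pairwise_aedisjoint {α : Type*}
    [MeasurableSpace α] {μ : Measure α} {𝒯 : Set (Set α)} {S : Set α} (hS : μ S ≠ ∞)
    (h𝒯 : ∀ T ∈ 𝒯, MeasurableSet T) (hdisj : 𝒯.Pairwise (AEDisjoint μ)) :
    {T ∈ 𝒯 | 0 < μ (T ∩ S)}.Countable := by
  have : IsFiniteMeasure (μ.restrict S) := isFiniteMeasure_restrict.2 hS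
  have hcount := Measure.countable_meas_pos_of_disjoint_iUnion₀ (μ := μ.restrict S)
    (As := ((↑) : 𝒯 → Set α)) (fun T => (h𝒯 T T.2).nullMeasurableSet)
    fun T₁ T₂ hne => Measure.absolutelyContinuous_of_le Measure.restrict_le_self
      (hdisj T₁.2 T₂.2 (Subtype.coe_ne_coe.2 hne))
  convert hcount.image ((↑) : 𝒯 → Set α) using 1
  ext T
  simp [Measure.restrict_apply (h𝒯 _ _), and_comm]

section Coset

variable {R E : Type*} [Ring R] [AddCommGroup E] [Module R E]

theorem vadd_submodule_eq_of_mem {V : Submodule R E} {x p : E} (h : p ∈ x +ᵥ (V : Set E)) :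
    x +ᵥ (V : Set E) = p +ᵥ (V : Set E) :=
  (leftAddCoset_eq_iff V.toAddSubgroup).2 ((mem_leftAddCoset_iff x).1 h)

theorem vadd_submodule_inter_eq {V₁ V₂ : Submodule R E} {x₁ x₂ p : E}
    (h₁ : p ∈ x₁ +ᵥ (V₁ : Set E)) (h₂ : p ∈ x₂ +ᵥ (V₂ : Set E)) :
    (x₁ +ᵥ (V₁ : Set E)) ∩ (x₂ +ᵥ (V₂ : Set E)) = p +ᵥ ((V₁ ⊓ V₂ : Submodule R E) : Set E) := by
  rw [vadd_submodule_eq_of_mem h₁, vadd_submodule_eq_of_mem h₂, Submodule.coe_inf, vadd_set_inter]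

end Coset

section Hausdorff

variable {E : Type*} [NormedAddCommGroup E] [NormedSpace ℝ E] [MeasurableSpace E] [BorelSpace E]

theorem hausdorffMeasure_vadd_submodule_eq_zero_of_finrank_lt (W : Submodule ℝ E)
    [FiniteDimensional ℝ W] {d : ℝ} (hd : finrank ℝ W < d) (p : E) :
    μH[d] (p +ᵥ (W : Set E)) = 0 := by
  have hW : (W : Set E) = ((↑) : W → E) '' univ := by simp
  rw [hausdorffMeasure_vadd p (Or.inr (AddAction.surjective p)), hW,
    isometry_subtype_coe.hausdorffMeasure_image (Or.inl ((Nat.cast_nonneg _).trans hd.le)),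
    Real.hausdorffMeasure_of_finrank_lt hd, Measure.coe_zero, Pi.zero_apply]

theorem aedisjoint_vadd_submodule_of_finrank_eq {n : ℕ} {V₁ V₂ : Submodule ℝ E}
    [FiniteDimensional ℝ V₁] [FiniteDimensional ℝ V₂] (h₁ : finrank ℝ V₁ = n)
    (h₂ : finrank ℝ V₂ = n) {x₁ x₂ : E} (hne : x₁ +ᵥ (V₁ : Set E) ≠ x₂ +ᵥ (V₂ : Set E)) :
    AEDisjoint μH[n] (x₁ +ᵥ (V₁ : Set E)) (x₂ +ᵥ (V₂ : Set E)) := by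
  obtain hempty | ⟨p, hp₁, hp₂⟩ :=
    ((x₁ +ᵥ (V₁ : Set E)) ∩ (x₂ +ᵥ (V₂ : Set E))).eq_empty_or_nonempty
  · exact (disjoint_iff_inter_eq_empty.2 hempty).aedisjoint
  have hV : ¬V₁ ≤ V₂ := fun hle => hne <| by
    rw [vadd_submodule_eq_of_mem hp₁, vadd_submodule_eq_of_mem hp₂,
      Submodule.eq_of_le_of_finrank_eq hle (h₁.trans h₂.symm)]
  rw [AEDisjoint, vadd_submodule_inter_eq hp₁ hp₂]
  refine hausdorffMeasure_vadd_submodule_eq_zero_of_finrank_lt _ ?_ p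
  exact_mod_cast h₁ ▸ Submodule.finrank_lt_finrank_of_lt (inf_lt_left.2 hV)

end Hausdorff

theorem stmt12_general (n m : ℕ)
    (S : Set (Euc m)) (hfin : μH[n] S < ⊤) :
    {T : Set (Euc m) |
        (∃ (x : Euc m) (V : Submodule ℝ (Euc m)), Module.finrank ℝ V = n ∧
          T = (fun v => x + v) '' (V : Set (Euc m))) ∧
        0 < μH[n] (T ∩ S)}.Countable := by
  refine countable_setOf_measure_inter_pos_of_pairwise_aedisjoint hfin.ne ?_ ?_
  · rintro _ ⟨x, V, -, rfl⟩
    exact (V.closed_of_finiteDimensional.vadd x).measurableSet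
  · rintro _ ⟨x₁, V₁, h₁, rfl⟩ _ ⟨x₂, V₂, h₂, rfl⟩ hne
    exact aedisjoint_vadd_submodule_of_finrank_eq h₁ h₂ hne

/-- Let `n ≤ m` and let `S ⊆ ℝ^m` be `H^n`-measurable with `H^n(S) < ∞`.
The collection of `n`-dimensional affine subspaces `T` of `ℝ^m` with `H^n(T ∩ S) > 0` is
countable. -/
theorem stmt12 (n m : ℕ) (hnm : n ≤ m)
    (S : Set (Euc m)) (hS : NullMeasurableSet S μH[n]) (hfin : μH[n] S < ⊤) :
    {T : Set (Euc m) |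
        (∃ (x : Euc m) (V : Submodule ℝ (Euc m)), Module.finrank ℝ V = n ∧
          T = (fun v => x + v) '' (V : Set (Euc m))) ∧
        0 < μH[n] (T ∩ S)}.Countable :=
  stmt12_general n m S hfin
end
end
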